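/- arXiv:2005.01112 — 6 statements merged into one kernel-verified Lean document; each statement's English description precedes it below -/
import Mathlib

section
/- If i ≤ l ≤ j are positions in a word w and the suffixes w[i:n] and w[j:n] have the same set of subsequences of length at most k, then w[l:n] also has the same set of subsequences of length at most k as w[i:n]. In other words, the equivalence classes of positions under Simon's congruence ∼_k restricted to suffixes form intervals of positions. -/
def SF {α : Type*} (k : ℕ) (w : List α) : Set (List α) :=
  {u | u.Sublist w ∧ u.length ≤ k}

/-- Simon's congruence: same set of subsequences of length at most `k`. -/
def SimEq {α : Type*} (k : ℕ) (u v : List α) : Prop := SF k u = SF k v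

theorem SF_mono {α : Type*} (k : ℕ) {u v : List α} (h : u.Sublist v) : SF k u ⊆ SF k v :=
  fun _ hx => ⟨hx.1.trans h, hx.2⟩

theorem simEq_of_sublist_of_sublist {α : Type*} {k : ℕ} {u v w : List α}
    (huv : u.Sublist v) (hvw : v.Sublist w) (h : SimEq k w u) : SimEq k v w :=
  (SF_mono k hvw).antisymm (h ▸ SF_mono k huv)

theorem simEq_interval_general {α : Type*} (w : List α) (k i l j : ℕ)
    (hil : i ≤ l) (hlj : l ≤ j)
    (h : SimEq k (w.drop i) (w.drop j)) :
    SimEq k (w.drop l) (w.drop i) :=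
  simEq_of_sublist_of_sublist (w.drop_sublist_drop_left hlj) (w.drop_sublist_drop_left hil) h

/-- Equivalence classes of suffix positions under `∼_k` are intervals:
if i ≤ l ≤ j and the suffixes at i and j are k-equivalent, so is the suffix at l. -/
theorem simEq_interval {α : Type*} (w : List α) (k i l j : ℕ)
    (hil : i ≤ l) (hlj : l ≤ j) (hj : j ≤ w.length)
    (h : SimEq k (w.drop i) (w.drop j)) :
    SimEq k (w.drop l) (w.drop i) :=
  simEq_interval_general w k i l j hil hlj h
end

section
/- Let a = [m_a, n_a] be a k-block of a word w with k > 0 and m_a < n_a (i.e., all positions in [m_a, n_a] are pairwise k-equivalent, and this interval is maximal). Then for every position i with m_a ≤ i ≤ n_a − 1, the positions i and n_a are not (k+1)-equivalent. -/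
namespace SF

variable {α : Type*} {k : ℕ}

theorem mono {x y : List α} (h : y.Sublist x) : SF k y ⊆ SF k x :=
  fun _ ⟨hu, huk⟩ => ⟨hu.trans h, huk⟩

theorem exists_mem_not_sublist_of_not_simEq {x y : List α} (hyx : y.Sublist x)
    (h : ¬ SimEq k x y) : ∃ u ∈ SF k x, ¬ u.Sublist y := by
  by_contra! hall
  exact h <| (mono hyx).antisymm' fun u hu => ⟨hall u hu, hu.2⟩

theorem not_simEq_succ_cons {a b : α} {y z u : List α} (hzy : (b :: z).Sublist y)
    (hu : u ∈ SF k (b :: z)) (hnu : ¬ u.Sublist z) :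
    ¬ SimEq (k + 1) (a :: y) (b :: z) := by
  intro hsim
  have hau : a :: u ∈ SF (k + 1) (a :: y) :=
    ⟨(hu.1.trans hzy).cons_cons a, Nat.succ_le_succ hu.2⟩
  rw [hsim] at hau
  rcases List.cons_sublist_cons'.mp hau.1 with h | ⟨-, h⟩
  · exact hnu ((List.sublist_cons_self a u).trans h)
  · exact hnu h

end SF

theorem split_last_position_general {α : Type*} (w : List α) (k ma na : ℕ)
    (hk : 0 < k) (hna : na < w.length)
    (hmax : ¬ SimEq k (w.drop na) (w.drop (na + 1)) ∨ na = w.length - 1) :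
    ∀ i, ma ≤ i → i < na → ¬ SimEq (k + 1) (w.drop i) (w.drop na) := by
  intro i _ hin
  have hdna : w.drop na = w[na] :: w.drop (na + 1) := List.drop_eq_getElem_cons hna
  obtain ⟨u, hu, hnu⟩ : ∃ u ∈ SF k (w.drop na), ¬ u.Sublist (w.drop (na + 1)) := by
    rcases hmax with hne | hlast
    · exact SF.exists_mem_not_sublist_of_not_simEq
        (hdna ▸ List.sublist_cons_self _ _) hne
    · have hnil : w.drop (na + 1) = [] := List.drop_eq_nil_of_le (by omega)
      refine ⟨[w[na]], ⟨?_, hk⟩, by simp [hnil]⟩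
      rw [hdna]
      exact (List.nil_sublist _).cons_cons _
  rw [List.drop_eq_getElem_cons (hin.trans hna), hdna]
  rw [hdna] at hu
  exact SF.not_simEq_succ_cons (hdna ▸ List.drop_sublist_drop_left w hin) hu hnu

/-- If `[m_a, n_a]` is a k-block (k > 0) with more than one position, then no
position strictly inside the block is (k+1)-equivalent to the last position `n_a`.
Positions are 0-indexed; the suffix at position `i` is `w.drop i`. -/
theorem split_last_position {α : Type*} (w : List α) (k ma na : ℕ)
    (hk : 0 < k) (hmn : ma < na) (hna : na < w.length)
    (hblk : ∀ i j, ma ≤ i → i ≤ na → ma ≤ j → j ≤ na →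
      SimEq k (w.drop i) (w.drop j))
    (hmax : ¬ SimEq k (w.drop na) (w.drop (na + 1)) ∨ na = w.length - 1) :
    ∀ i, ma ≤ i → i < na → ¬ SimEq (k + 1) (w.drop i) (w.drop na) :=
  split_last_position_general w k ma na hk hna hmax
end

section
/- Let a = [m_a, n_a] be a k-block of a word w with k > 0 and m_a < n_a, and let a† = [m_a, n_a − 1]. Then for positions i, j in a†: i ∼_{k+1} j if and only if the set of letters occurring in w[i : n_a − 1] equals the set of letters occurring in w[j : n_a − 1]. -/
def alph {α : Type*} (w : List α) : Set α := {x | x ∈ w}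

/-- The factor `w[i : l]` (positions `i` through `l` inclusive, 0-indexed). -/
def factor {α : Type*} (w : List α) (i l : ℕ) : List α :=
  (w.drop i).take (l + 1 - i)

section

variable {α : Type*}

theorem cons_sublist_drop_iff {w u : List α} {x : α} {i : ℕ} :
    (x :: u).Sublist (w.drop i) ↔ ∃ t, i ≤ t ∧ w[t]? = some x ∧ u.Sublist (w.drop (t + 1)) := by
  constructor
  · intro h
    obtain ⟨r₁, r₂, hsplit, hx, hu⟩ := List.cons_sublist_iff.1 h
    obtain ⟨p, hp, rfl⟩ := List.mem_iff_getElem.1 hx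
    have hr₂ : r₂ = w.drop (i + r₁.length) := by
      rw [← List.drop_drop, hsplit, List.drop_left]
    refine ⟨i + p, by omega, ?_, hu.trans (hr₂ ▸ w.drop_sublist_drop_left (by omega))⟩
    rw [← List.getElem?_drop, hsplit, List.getElem?_append_left hp, List.getElem?_eq_getElem]
  · rintro ⟨t, hit, hx, hu⟩
    obtain ⟨ht, rfl⟩ := List.getElem?_eq_some_iff.1 hx
    exact (List.drop_eq_getElem_cons ht ▸ hu.cons_cons _).trans (w.drop_sublist_drop_left hit)

theorem mem_factor_iff {w : List α} {x : α} {i l : ℕ} :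
    x ∈ factor w i l ↔ ∃ t, i ≤ t ∧ t ≤ l ∧ w[t]? = some x := by
  simp only [factor, List.mem_iff_getElem?, List.getElem?_take, List.getElem?_drop]
  constructor
  · rintro ⟨p, hp⟩
    split_ifs at hp with hlt
    exact ⟨i + p, by omega, by omega, hp⟩
  · rintro ⟨t, hit, htl, hx⟩
    refine ⟨t - i, ?_⟩
    rw [if_pos (by omega), Nat.add_sub_cancel' hit, hx]

theorem SimEq.symm {k : ℕ} {u v : List α} (h : SimEq k u v) : SimEq k v u := Eq.symm h

theorem SimEq.sublist {k : ℕ} {u v s : List α} (h : SimEq k u v) (hs : s.Sublist u)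
    (hlen : s.length ≤ k) : s.Sublist v :=
  (show s ∈ SF k v from h ▸ ⟨hs, hlen⟩).1

theorem exists_sublist_drop_not_sublist_drop_succ {w : List α} {k n : ℕ} (hk : 0 < k)
    (hn : n < w.length) (h : ¬ SimEq k (w.drop n) (w.drop (n + 1)) ∨ n = w.length - 1) :
    ∃ u : List α, u.Sublist (w.drop n) ∧ u.length ≤ k ∧ ¬ u.Sublist (w.drop (n + 1)) := by
  rcases h with hne | hlast
  · have hmono : SF k (w.drop (n + 1)) ⊆ SF k (w.drop n) := fun u hu =>
      ⟨hu.1.trans (w.drop_sublist_drop_left n.le_succ), hu.2⟩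
    obtain ⟨u, ⟨hu, hlen⟩, hnot⟩ := Set.exists_of_ssubset (hmono.ssubset_of_ne (Ne.symm hne))
    exact ⟨u, hu, hlen, fun hsub => hnot ⟨hsub, hlen⟩⟩
  · have hnil : w.drop (n + 1) = [] := List.drop_eq_nil_of_le (by omega)
    refine ⟨[w[n]], ?_, hk, by simp [hnil]⟩
    rw [List.drop_eq_getElem_cons hn, hnil]

variable {w u : List α} {k ma na : ℕ}

theorem alph_factor_subset_of_simEq_succ
    (hblk : ∀ i j, ma ≤ i → i ≤ na → ma ≤ j → j ≤ na → SimEq k (w.drop i) (w.drop j))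
    (hmn : ma < na) (hu : u.Sublist (w.drop na)) (hlen : u.length ≤ k)
    (hsep : ¬ u.Sublist (w.drop (na + 1))) {i j : ℕ} (hi : ma ≤ i)
    (h : SimEq (k + 1) (w.drop i) (w.drop j)) :
    alph (factor w i (na - 1)) ⊆ alph (factor w j (na - 1)) := by
  intro x hx
  obtain ⟨s, his, hsn, hxs⟩ := mem_factor_iff.1 hx
  have hus : u.Sublist (w.drop (s + 1)) :=
    (hblk na (s + 1) hmn.le le_rfl (by omega) (by omega)).sublist hu hlen
  have hxu : (x :: u).Sublist (w.drop j) :=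
    h.sublist (cons_sublist_drop_iff.2 ⟨s, his, hxs, hus⟩) (by simpa using hlen)
  obtain ⟨t, hjt, hxt, hut⟩ := cons_sublist_drop_iff.1 hxu
  have htn : t ≤ na - 1 := by
    by_contra! hnt
    exact hsep (hut.trans (w.drop_sublist_drop_left (by omega)))
  exact mem_factor_iff.2 ⟨t, hjt, htn, hxt⟩

theorem sf_succ_subset_of_alph_factor_subset
    (hblk : ∀ i j, ma ≤ i → i ≤ na → ma ≤ j → j ≤ na → SimEq k (w.drop i) (w.drop j))
    {i j : ℕ} (hi : ma ≤ i) (hj : ma ≤ j) (hjn : j ≤ na)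
    (h : alph (factor w i (na - 1)) ⊆ alph (factor w j (na - 1))) :
    SF (k + 1) (w.drop i) ⊆ SF (k + 1) (w.drop j) := by
  rintro (_ | ⟨x, v⟩) ⟨hv, hlen⟩
  · exact ⟨List.nil_sublist _, hlen⟩
  obtain ⟨t, hit, hxt, hvt⟩ := cons_sublist_drop_iff.1 hv
  refine ⟨?_, hlen⟩
  by_cases hnt : na ≤ t
  · exact (cons_sublist_drop_iff.2 ⟨t, le_rfl, hxt, hvt⟩).trans
      (w.drop_sublist_drop_left (hjn.trans hnt))
  obtain ⟨s, hjs, hsn, hxs⟩ := mem_factor_iff.1 (h (mem_factor_iff.2 ⟨t, hit, by omega, hxt⟩))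
  have hvs : v.Sublist (w.drop (s + 1)) :=
    (hblk (t + 1) (s + 1) (by omega) (by omega) (by omega) (by omega)).sublist hvt
      (by simpa using hlen)
  exact cons_sublist_drop_iff.2 ⟨s, hjs, hxs, hvs⟩

end

/-- For a k-block `[m_a, n_a]` (k > 0, m_a < n_a) and positions i, j in the
truncated block `[m_a, n_a - 1]`: i ∼_{k+1} j iff the sets of letters of
`w[i : n_a - 1]` and `w[j : n_a - 1]` coincide. -/
theorem split_characterization {α : Type*} (w : List α) (k ma na : ℕ)
    (hk : 0 < k) (hmn : ma < na) (hna : na < w.length)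
    (hblk : ∀ i j, ma ≤ i → i ≤ na → ma ≤ j → j ≤ na →
      SimEq k (w.drop i) (w.drop j))
    (hmax : ¬ SimEq k (w.drop na) (w.drop (na + 1)) ∨ na = w.length - 1) :
    ∀ i j, ma ≤ i → i ≤ na - 1 → ma ≤ j → j ≤ na - 1 →
      (SimEq (k + 1) (w.drop i) (w.drop j) ↔
        alph (factor w i (na - 1)) = alph (factor w j (na - 1))) := by
  intro i j hi hin hj hjn
  obtain ⟨u, hu, hlen, hsep⟩ := exists_sublist_drop_not_sublist_drop_succ hk hna hmax
  constructor
  · intro h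
    exact (alph_factor_subset_of_simEq_succ hblk hmn hu hlen hsep hi h).antisymm
      (alph_factor_subset_of_simEq_succ hblk hmn hu hlen hsep hj h.symm)
  · intro h
    exact (sf_succ_subset_of_alph_factor_subset hblk hi hj (by omega) h.subset).antisymm
      (sf_succ_subset_of_alph_factor_subset hblk hj hi (by omega) h.superset)
end

section
/- Let s and t be words with s[i:|s|] ∼_k t[j:|t|] for some k ≥ 1 (the suffixes have the same subsequences of length at most k). Then s[i:|s|] and t[j:|t|] are NOT (k+1)-equivalent if and only if there exists a letter x such that s[p+1:|s|] and t[q+1:|t|] are not k-equivalent, where p is the leftmost position ≥ i with s[p] = x and q is the leftmost position ≥ j with t[q] = x (with the convention that if x occurs in exactly one of the two suffixes, then the suffixes are not (k+1)-equivalent). -/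
/-- `p` is the leftmost position `≥ i` of letter `x` in `w` (0-indexed). -/
def IsNextpos {α : Type*} (w : List α) (i p : ℕ) (x : α) : Prop :=
  i ≤ p ∧ w[p]? = some x ∧ ∀ r, i ≤ r → r < p → w[r]? ≠ some x

/-!
A subsequence `x :: w` embeds into a word `u` iff `w` embeds into the part of `u` after the
first occurrence of `x` (greedy embedding). Hence, once `u ∼_k v` guarantees that `u` and `v`
contain the same letters, the subsequences of length `≤ k + 1` of `u` and `v` agree iff, for every
letter `x` occurring in them, the suffixes after the first `x` are `k`-equivalent.
-/

namespace List

theorem cons_sublist_append_cons_iff {α : Type*} {x : α} {l₁ l₂ : List α} (hx : x ∉ l₁)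
    (w : List α) : (x :: w).Sublist (l₁ ++ x :: l₂) ↔ w.Sublist l₂ := by
  induction l₁ with
  | nil => exact cons_sublist_cons
  | cons a l₁ ih =>
    rw [mem_cons, not_or] at hx
    rw [cons_append, ← ih hx.2]
    exact ⟨(·.of_cons_of_ne hx.1), (·.cons a)⟩

end List

section SimonCongruence

variable {α : Type*}

theorem simEq_iff_sublist_iff {k : ℕ} {u v : List α} :
    SimEq k u v ↔ ∀ w : List α, w.length ≤ k → (w.Sublist u ↔ w.Sublist v) := by
  simp only [SimEq, SF, Set.ext_iff, Set.mem_ofPred_eq]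
  exact forall_congr' fun w => ⟨fun h hw => by simpa [hw] using h, fun h => by
    by_cases hw : w.length ≤ k <;> simp [hw, h]⟩

theorem SimEq.mem_iff {k : ℕ} (hk : 1 ≤ k) {u v : List α} (h : SimEq k u v) (x : α) :
    x ∈ u ↔ x ∈ v := by
  simpa only [List.singleton_sublist] using simEq_iff_sublist_iff.1 h [x] hk

theorem exists_isNextpos_of_mem_drop {s : List α} {i : ℕ} {x : α} (hx : x ∈ s.drop i) :
    ∃ p, IsNextpos s i p x := by
  classical
  have hocc : ∃ m, (s.drop i)[m]? = some x := List.mem_iff_getElem?.1 hx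
  refine ⟨i + Nat.find hocc, by omega, by simpa using Nat.find_spec hocc, fun r hir hr => ?_⟩
  have := Nat.find_min hocc (m := r - i) (by omega)
  rwa [List.getElem?_drop, Nat.add_sub_cancel' hir] at this

theorem IsNextpos.drop_eq_append_cons {s : List α} {i p : ℕ} {x : α} (hp : IsNextpos s i p x) :
    ∃ l, x ∉ l ∧ s.drop i = l ++ x :: s.drop (p + 1) := by
  obtain ⟨hip, hpx, hmin⟩ := hp
  obtain ⟨hlen, rfl⟩ := List.getElem?_eq_some_iff.1 hpx
  refine ⟨(s.drop i).take (p - i), fun hx => ?_, ?_⟩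
  · obtain ⟨r, hr⟩ := List.mem_iff_getElem?.1 hx
    rw [List.getElem?_take] at hr
    split_ifs at hr with hrp
    rw [List.getElem?_drop] at hr
    exact hmin (i + r) (by omega) (by omega) hr
  · have hdrop : s.drop p = (s.drop i).drop (p - i) := by
      rw [List.drop_drop, Nat.add_sub_cancel' hip]
    rw [← List.drop_eq_getElem_cons hlen, hdrop, List.take_append_drop]

theorem IsNextpos.cons_sublist_drop_iff {s : List α} {i p : ℕ} {x : α}
    (hp : IsNextpos s i p x) (w : List α) : (x :: w).Sublist (s.drop i) ↔ w.Sublist (s.drop (p + 1)) := by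
  obtain ⟨l, hx, hs⟩ := hp.drop_eq_append_cons
  rw [hs]
  exact List.cons_sublist_append_cons_iff hx w

theorem simEq_succ_drop_iff {k : ℕ} {s t : List α} {i j : ℕ}
    (hmem : ∀ x, x ∈ s.drop i ↔ x ∈ t.drop j) :
    SimEq (k + 1) (s.drop i) (t.drop j) ↔ ∀ x p q, IsNextpos s i p x → IsNextpos t j q x →
      SimEq k (s.drop (p + 1)) (t.drop (q + 1)) := by
  simp only [simEq_iff_sublist_iff]
  constructor
  · intro h x p q hp hq w hw
    rw [← hp.cons_sublist_drop_iff, ← hq.cons_sublist_drop_iff]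
    exact h (x :: w) (by simpa using hw)
  · rintro h (_ | ⟨x, w⟩) hw
    · simp
    by_cases hx : x ∈ s.drop i
    · obtain ⟨p, hp⟩ := exists_isNextpos_of_mem_drop hx
      obtain ⟨q, hq⟩ := exists_isNextpos_of_mem_drop ((hmem x).1 hx)
      rw [hp.cons_sublist_drop_iff, hq.cons_sublist_drop_iff]
      exact h x p q hp hq w (by simpa using hw)
    · have hx' : x ∉ t.drop j := (hmem x).not.1 hx
      exact iff_of_false (fun hw => hx (hw.subset List.mem_cons_self))
        (fun hw => hx' (hw.subset List.mem_cons_self))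

end SimonCongruence

/-- Two k-equivalent suffixes fail to be (k+1)-equivalent iff there is a letter x
such that the suffixes just after the next occurrences of x are not k-equivalent;
by convention, if x occurs in exactly one of the suffixes, they are not
(k+1)-equivalent. -/
theorem block_equivalence_criterion {α : Type*} (k : ℕ) (hk : 1 ≤ k)
    (s t : List α) (i j : ℕ)
    (h : SimEq k (s.drop i) (t.drop j)) :
    ¬ SimEq (k + 1) (s.drop i) (t.drop j) ↔
      ∃ x : α,
        ((x ∈ s.drop i ∧ x ∉ t.drop j) ∨ (x ∉ s.drop i ∧ x ∈ t.drop j)) ∨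
        ∃ p q, IsNextpos s i p x ∧ IsNextpos t j q x ∧
          ¬ SimEq k (s.drop (p + 1)) (t.drop (q + 1)) := by
  have hmem := h.mem_iff hk
  rw [simEq_succ_drop_iff hmem]
  push Not
  constructor
  · rintro ⟨x, p, q, hp, hq, hne⟩
    exact ⟨x, .inr ⟨p, q, hp, hq, hne⟩⟩
  · rintro ⟨x, hdiff | hne⟩
    · exact absurd (hmem x) (by tauto)
    · exact ⟨x, hne⟩
end

section
/- Let u, v be words with u ∼_k v (same subsequences of length at most k) for some k ≥ 1, and suppose alph(u) = alph(v). If for every letter x occurring in u (equivalently in v), u[p_x+1:|u|] ∼_k v[q_x+1:|v|], where p_x and q_x are the leftmost occurrences of x in u and v respectively, then u ∼_{k+1} v. -/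
/-- `p` is the leftmost occurrence of the letter `x` in `w`. -/
def IsFirstOcc {α : Type*} (w : List α) (p : ℕ) (x : α) : Prop :=
  w[p]? = some x ∧ ∀ r, r < p → w[r]? ≠ some x

lemma exists_firstOcc {α : Type*} {w : List α} {x : α} (hx : x ∈ w) :
    ∃ p, IsFirstOcc w p x := by
  classical
  have hex : ∃ n, w[n]? = some x := List.mem_iff_getElem?.mp hx
  exact ⟨Nat.find hex, Nat.find_spec hex, fun r hr => Nat.find_min hex hr⟩

lemma cons_sublist_of_not_mem {α : Type*} {a : α} {l : List α} :
    ∀ s t : List α, (a :: l).Sublist (s ++ t) → a ∉ s → (a :: l).Sublist t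
  | [], _, h, _ => h
  | b :: s, t, h, hna => by
    cases h with
    | cons _ h' =>
      exact cons_sublist_of_not_mem s t h' (fun hm => hna (List.mem_cons_of_mem _ hm))
    | cons_cons _ h' => exact absurd List.mem_cons_self hna

lemma sf_succ_subset {α : Type*} (k : ℕ) (u v : List α) (halph : alph u = alph v)
    (h : ∀ x : α, ∀ p q : ℕ, IsFirstOcc u p x → IsFirstOcc v q x →
      SimEq k (u.drop (p + 1)) (v.drop (q + 1))) :
    SF (k + 1) u ⊆ SF (k + 1) v := by
  rintro w ⟨hsub, hlen⟩
  cases w with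
  | nil => exact ⟨List.nil_sublist v, by simp⟩
  | cons x w' =>
    have hxu : x ∈ u := hsub.subset List.mem_cons_self
    have hxv : x ∈ v := by
      have : x ∈ alph v := halph ▸ (hxu : x ∈ alph u)
      exact this
    obtain ⟨p, hpu⟩ := exists_firstOcc hxu
    obtain ⟨q, hqv⟩ := exists_firstOcc hxv
    obtain ⟨hp_lt, hpx⟩ := List.getElem?_eq_some_iff.mp hpu.1
    obtain ⟨hq_lt, hqx⟩ := List.getElem?_eq_some_iff.mp hqv.1
    have hxtake : x ∉ u.take p := by
      intro hmem
      obtain ⟨r, hr, hrx⟩ := List.mem_iff_getElem.mp hmem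
      have hrp : r < p := lt_of_lt_of_le hr (by simp [List.length_take])
      rw [List.getElem_take] at hrx
      have : u[r]? = some x := by
        rw [List.getElem?_eq_getElem (hrp.trans hp_lt), hrx]
      exact hpu.2 r hrp this
    have hu_eq : u = u.take p ++ x :: u.drop (p + 1) := by
      conv_lhs => rw [← List.take_append_drop p u]
      congr 1
      rw [← List.getElem_cons_drop hp_lt, hpx]
    have hv_eq : v = v.take q ++ x :: v.drop (q + 1) := by
      conv_lhs => rw [← List.take_append_drop q v]
      congr 1
      rw [← List.getElem_cons_drop hq_lt, hqx]
    have hsub' : (x :: w').Sublist (u.take p ++ (x :: u.drop (p + 1))) := hu_eq ▸ hsub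
    have hw'u : w'.Sublist (u.drop (p + 1)) := by
      have := cons_sublist_of_not_mem _ _ hsub' hxtake
      exact List.cons_sublist_cons.mp this
    have hlen' : w'.length ≤ k := by simpa using hlen
    have hk' := h x p q hpu hqv
    have hw'v : w'.Sublist (v.drop (q + 1)) := by
      have : w' ∈ SF k (v.drop (q + 1)) := hk' ▸ (⟨hw'u, hlen'⟩ : w' ∈ SF k (u.drop (p+1)))
      exact this.1
    refine ⟨?_, hlen⟩
    rw [hv_eq]
    exact (List.Sublist.cons₂ x hw'v).trans (List.sublist_append_right _ _)

/-- If u ∼_k v (k ≥ 1), alph(u) = alph(v), and for every letter x the suffixes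
of u and v after the leftmost occurrence of x are k-equivalent, then u ∼_{k+1} v. -/
theorem simEq_succ_of_first_occurrences {α : Type*} (k : ℕ) (hk : 1 ≤ k)
    (u v : List α) (huv : SimEq k u v) (halph : alph u = alph v)
    (h : ∀ x : α, ∀ p q : ℕ, IsFirstOcc u p x → IsFirstOcc v q x →
      SimEq k (u.drop (p + 1)) (v.drop (q + 1))) :
    SimEq (k + 1) u v := by
  exact Set.Subset.antisymm (sf_succ_subset k u v halph h)
    (sf_succ_subset k v u halph.symm (fun x p q hv hu => (h x q p hu hv).symm))
end

section
/- For words u and v with alph(u) = alph(v), if for every letter x in alph(u) the suffixes of u and v after the leftmost occurrence of x are k-equivalent (u[p_x+1:] ∼_k v[q_x+1:] where p_x, q_x are the leftmost occurrences of x in u and v), then u ∼_{k+1} v. -/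
/-!
A nonempty subsequence `x :: t` of `w` can always be embedded greedily, with `x` at its leftmost
occurrence `p_x` in `w`; so `x :: t` is a subsequence of `w` exactly when `t` is a subsequence of
`w[p_x+1:]`. Hence the subsequences of length at most `k + 1` of `w` are `[]` and the words
`x :: t` with `x ∈ alph w` and `t` a subsequence of length at most `k` of `w[p_x+1:]`.
-/

section

variable {α : Type*}

theorem List.cons_sublist_append_cons_iff_of_notMem {x : α} {t l₁ l₂ : List α} (hx : x ∉ l₁) :
    (x :: t).Sublist (l₁ ++ x :: l₂) ↔ t.Sublist l₂ := by
  refine ⟨fun hs => ?_, fun ht =>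
    (List.cons_sublist_cons.mpr ht).trans (List.sublist_append_right _ _)⟩
  obtain ⟨m₁, m₂, hsplit, hm₁, hm₂⟩ := List.sublist_append_iff.mp hs
  cases m₁ with
  | nil =>
    rw [List.nil_append] at hsplit
    exact List.cons_sublist_cons.mp (hsplit ▸ hm₂)
  | cons y m =>
    obtain rfl : x = y := (List.cons.inj hsplit).1
    exact absurd (hm₁.subset List.mem_cons_self) hx

theorem mem_of_cons_mem_SF {k : ℕ} {w t : List α} {x : α} (h : x :: t ∈ SF k w) : x ∈ w :=
  h.1.subset List.mem_cons_self

theorem exists_isFirstOcc {w : List α} {x : α} (hx : x ∈ w) : ∃ p, IsFirstOcc w p x := by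
  classical
  have hex : ∃ p : ℕ, w[p]? = some x := List.mem_iff_getElem?.mp hx
  exact ⟨Nat.find hex, Nat.find_spec hex, fun r hr => Nat.find_min hex hr⟩

namespace IsFirstOcc

variable {w t : List α} {p : ℕ} {x : α}

theorem eq_take_append_cons (h : IsFirstOcc w p x) : w = w.take p ++ x :: w.drop (p + 1) := by
  obtain ⟨hp, hwp⟩ := List.getElem?_eq_some_iff.mp h.1
  rw [← hwp, ← List.drop_eq_getElem_cons hp, List.take_append_drop]

theorem notMem_take (h : IsFirstOcc w p x) : x ∉ w.take p := by
  intro hx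
  obtain ⟨r, hr, hwr⟩ := List.mem_take_iff_getElem.mp hx
  exact h.2 r (lt_of_lt_of_le hr (min_le_left _ _)) (List.getElem?_eq_some_iff.mpr ⟨_, hwr⟩)

theorem cons_sublist_iff (h : IsFirstOcc w p x) :
    (x :: t).Sublist w ↔ t.Sublist (w.drop (p + 1)) := by
  conv_lhs => rw [h.eq_take_append_cons]
  exact List.cons_sublist_append_cons_iff_of_notMem h.notMem_take

theorem cons_mem_SF_succ_iff {k : ℕ} (h : IsFirstOcc w p x) :
    x :: t ∈ SF (k + 1) w ↔ t ∈ SF k (w.drop (p + 1)) := by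
  simp only [SF, Set.mem_ofPred_eq, h.cons_sublist_iff, List.length_cons,
    Nat.add_le_add_iff_right]

end IsFirstOcc

end

/-- If alph(u) = alph(v) and for every letter x ∈ alph(u) the suffixes of u and v
after the leftmost occurrence of x are k-equivalent, then u ∼_{k+1} v. -/
theorem simEq_succ_of_first_occurrences' {α : Type*} (k : ℕ)
    (u v : List α) (halph : alph u = alph v)
    (h : ∀ x ∈ alph u, ∀ p q : ℕ, IsFirstOcc u p x → IsFirstOcc v q x →
      SimEq k (u.drop (p + 1)) (v.drop (q + 1))) :
    SimEq (k + 1) u v := by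
  ext (_ | ⟨x, t⟩)
  · simp [SF]
  have hmem : x ∈ u ↔ x ∈ v := Set.ext_iff.mp halph x
  by_cases hxu : x ∈ u
  · obtain ⟨p, hp⟩ := exists_isFirstOcc hxu
    obtain ⟨q, hq⟩ := exists_isFirstOcc (hmem.mp hxu)
    rw [hp.cons_mem_SF_succ_iff, hq.cons_mem_SF_succ_iff, h x hxu p q hp hq]
  · exact iff_of_false (fun hs => hxu (mem_of_cons_mem_SF hs))
      (fun hs => hxu (hmem.mpr (mem_of_cons_mem_SF hs)))
end
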